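/- arXiv:1511.03751 — 3 statements merged into one kernel-verified Lean document; each statement's English description precedes it below -/
import Mathlib

section
/- For 1 < α < 2, λ ≥ 0, h > 0, with g_k = Γ(k-α)/(Γ(-α)Γ(k+1)) the Grünwald coefficients and μ_{-1} = (4 - 7α + 3α²)/24, μ_0 = (8 + α - 3α²)/12, μ_1 = (4 + 5α + 3α²)/24, define w_0 = μ_1 g_0 e^{λh}, w_1 = μ_1 g_1 + μ_0 g_0, and w_k = (μ_1 g_k + μ_0 g_{k-1} + μ_{-1} g_{k-2}) e^{(1-k)λh} for k ≥ 2. Then w_0 > 0 and w_1 ≤ 0. -/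
/-!
As `α` is not an integer, `Γ(-α) ≠ 0`, so `g₀ = 1` and `g₁ = -α`, and both claims reduce to polynomial inequalities in `α`:
`24 μ₁ = 3α² + 5α + 4` has negative discriminant, and
`24 w₁ = 16 - 2α - 11α² - 3α³ = -(α - 1)(3α² + 14α + 16)`.
-/

open Real

noncomputable def gruenwaldCoeff (α : ℝ) (k : ℕ) : ℝ :=
  Gamma ((k : ℝ) - α) / (Gamma (-α) * Gamma ((k : ℝ) + 1))

lemma Real.Gamma_neg_ne_zero_of_lt_of_lt {α : ℝ} (n : ℕ) (hn : (n : ℝ) < α) (hn' : α < n + 1) :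
    Gamma (-α) ≠ 0 := by
  refine Gamma_ne_zero fun m hm => ?_
  have hmα : α = m := by linarith
  subst hmα
  have h₁ : n < m := by exact_mod_cast hn
  have h₂ : m < n + 1 := by exact_mod_cast hn'
  omega

namespace gruenwaldCoeff

variable {α : ℝ}

lemma zero (hα : Gamma (-α) ≠ 0) : gruenwaldCoeff α 0 = 1 := by
  simp [gruenwaldCoeff, hα]

lemma one (hα : Gamma (-α) ≠ 0) : gruenwaldCoeff α 1 = -α := by
  have hα₀ : -α ≠ 0 := fun h => hα (by rw [h, Gamma_zero])
  have hsub : ((1 : ℕ) : ℝ) - α = -α + 1 := by push_cast; ring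
  have htwo : ((1 : ℕ) : ℝ) + 1 = 2 := by norm_num
  rw [gruenwaldCoeff, hsub, htwo, Gamma_add_one hα₀, Gamma_two]
  field_simp

end gruenwaldCoeff

lemma four_add_five_mul_add_three_mul_sq_pos (α : ℝ) : 0 < 4 + 5 * α + 3 * α ^ 2 := by
  nlinarith [sq_nonneg (α + 5 / 6)]

lemma gruenwald_weight_one_nonpos {α : ℝ} (hα : 1 ≤ α) :
    (4 + 5 * α + 3 * α ^ 2) / 24 * -α + (8 + α - 3 * α ^ 2) / 12 ≤ 0 := by
  have hfactor : (4 + 5 * α + 3 * α ^ 2) / 24 * -α + (8 + α - 3 * α ^ 2) / 12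
      = -((α - 1) * (3 * α ^ 2 + 14 * α + 16)) / 24 := by ring
  rw [hfactor]
  have : 0 ≤ (α - 1) * (3 * α ^ 2 + 14 * α + 16) := by
    apply mul_nonneg <;> nlinarith
  linarith

theorem stmt1_general (α lam h : ℝ) (hα : 1 < α) (hα2 : α < 2)
    (g : ℕ → ℝ) (hg : ∀ k, g k = Real.Gamma ((k : ℝ) - α) / (Real.Gamma (-α) * Real.Gamma ((k : ℝ) + 1)))
    (μ0 μ1 : ℝ)
    (h0 : μ0 = (8 + α - 3*α^2)/12)
    (h1 : μ1 = (4 + 5*α + 3*α^2)/24)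
    (w : ℕ → ℝ)
    (hw0 : w 0 = μ1 * g 0 * Real.exp (lam * h))
    (hw1 : w 1 = μ1 * g 1 + μ0 * g 0) :
    0 < w 0 ∧ w 1 ≤ 0 := by
  obtain rfl : g = gruenwaldCoeff α := funext hg
  have hΓ : Gamma (-α) ≠ 0 := Gamma_neg_ne_zero_of_lt_of_lt 1 (by simpa) (by norm_num; linarith)
  rw [hw0, hw1, gruenwaldCoeff.zero hΓ, gruenwaldCoeff.one hΓ, h0, h1]
  constructor
  · have := four_add_five_mul_add_three_mul_sq_pos α
    positivity
  · simpa using gruenwald_weight_one_nonpos hα.le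

theorem stmt1 (α lam h : ℝ) (hα : 1 < α) (hα2 : α < 2) (hlam : 0 ≤ lam) (hh : 0 < h)
    (g : ℕ → ℝ) (hg : ∀ k, g k = Real.Gamma ((k : ℝ) - α) / (Real.Gamma (-α) * Real.Gamma ((k : ℝ) + 1)))
    (μm1 μ0 μ1 : ℝ)
    (hm1 : μm1 = (4 - 7*α + 3*α^2)/24)
    (h0 : μ0 = (8 + α - 3*α^2)/12)
    (h1 : μ1 = (4 + 5*α + 3*α^2)/24)
    (w : ℕ → ℝ)
    (hw0 : w 0 = μ1 * g 0 * Real.exp (lam * h))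
    (hw1 : w 1 = μ1 * g 1 + μ0 * g 0)
    (hwk : ∀ k, 2 ≤ k → w k = (μ1 * g k + μ0 * g (k-1) + μm1 * g (k-2)) * Real.exp ((1 - (k : ℝ)) * lam * h)) :
    0 < w 0 ∧ w 1 ≤ 0 :=
  stmt1_general α lam h hα hα2 g hg μ0 μ1 h0 h1 w hw0 hw1
end

section
/- For 1 < α < 2 and k ≥ 4, the weight w_k^{(α,λ)} = (μ_1 g_k^{(α)} + μ_0 g_{k-1}^{(α)} + μ_{-1} g_{k-2}^{(α)}) e^{(1-k)λh} is nonnegative, where λ ≥ 0, h > 0. -/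
/-!
The Grünwald weights satisfy `g (m + 1) = (m - α) / (m + 1) * g m`, so with `m = k - 2` the
WSGD combination `μ₁ g k + μ₀ g (k - 1) + μ₋₁ g (k - 2)` is `g m` times a quadratic in `m`
divided by `(m + 1)(m + 2)`. For `1 < α < 2` both `Γ(-α)` and `Γ(m - α)` are positive once
`m ≥ 2`, so `g m > 0`, and the quadratic is nonnegative for `m ≥ 2`.
-/

open Real

theorem Real.Gamma_pos_of_neg_two_lt_of_lt_neg_one {s : ℝ} (h₁ : -2 < s) (h₂ : s < -1) :
    0 < Gamma s := by
  have hshift : Gamma (s + 2) = (s + 1) * s * Gamma s := by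
    rw [show s + 2 = s + 1 + 1 by ring, Gamma_add_one (by linarith), Gamma_add_one (by linarith)]
    ring
  have hpos : 0 < (s + 1) * s * Gamma s := hshift ▸ Gamma_pos_of_pos (by linarith)
  exact pos_of_mul_pos_right hpos (mul_nonneg_of_nonpos_of_nonpos (by linarith) (by linarith))

noncomputable def grunwaldWeight (α : ℝ) (k : ℕ) : ℝ :=
  Gamma (k - α) / (Gamma (-α) * Gamma (k + 1))

theorem grunwaldWeight_succ {α : ℝ} {k : ℕ} (hk : (k : ℝ) ≠ α) :
    grunwaldWeight α (k + 1) = (k - α) / (k + 1) * grunwaldWeight α k := by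
  have hk' : (k : ℝ) - α ≠ 0 := sub_ne_zero.mpr hk
  simp only [grunwaldWeight, Nat.cast_succ, add_sub_right_comm _ 1 α,
    Gamma_add_one hk', Gamma_add_one (Nat.cast_add_one_ne_zero k)]
  field_simp

theorem grunwaldWeight_pos {α : ℝ} (h₁ : 1 < α) (h₂ : α < 2) {k : ℕ} (hk : 2 ≤ k) :
    0 < grunwaldWeight α k := by
  have hk' : (2 : ℝ) ≤ k := by exact_mod_cast hk
  have hΓα := Gamma_pos_of_neg_two_lt_of_lt_neg_one (s := -α) (by linarith) (by linarith)
  have hΓk := Gamma_pos_of_pos (s := k - α) (by linarith)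
  unfold grunwaldWeight
  positivity

/- With `t = m - 2` and `β = α - 1`, twenty-four times the left side is
`24 t² + (24 + 12 (2 - α)(α + 5)) t + 3β⁴ + 26β³ + 37β² - 114β + 72`, and the quartic is
positive on `[0, 1]` because `β (β - 4/5)² ≥ 0`. -/
theorem wsgd_quadratic_nonneg {α m : ℝ} (h₁ : 1 < α) (h₂ : α < 2) (hm : 2 ≤ m) :
    0 ≤ (4 + 5*α + 3*α^2)/24 * ((m + 1 - α) * (m - α)) + (8 + α - 3*α^2)/12 * ((m - α) * (m + 2))
      + (4 - 7*α + 3*α^2)/24 * ((m + 1) * (m + 2)) := by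
  have ht : 0 ≤ m - 2 := sub_nonneg.2 hm
  have hβ : 0 ≤ α - 1 := by linarith
  nlinarith [mul_nonneg ht (mul_nonneg (by linarith : (0:ℝ) ≤ 2 - α) (by linarith : (0:ℝ) ≤ α + 5)),
    mul_nonneg ht ht, mul_nonneg hβ (sq_nonneg (α - 1 - 4/5)), sq_nonneg (α - 1 - 5/6)]

theorem wsgd_combination_nonneg {α : ℝ} (h₁ : 1 < α) (h₂ : α < 2) {m : ℕ} (hm : 2 ≤ m) :
    0 ≤ (4 + 5*α + 3*α^2)/24 * grunwaldWeight α (m + 2)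
      + (8 + α - 3*α^2)/12 * grunwaldWeight α (m + 1)
      + (4 - 7*α + 3*α^2)/24 * grunwaldWeight α m := by
  have hm' : (2 : ℝ) ≤ m := by exact_mod_cast hm
  have hrec₁ := grunwaldWeight_succ (α := α) (k := m) (by linarith)
  have hrec₂ := grunwaldWeight_succ (α := α) (k := m + 1) (by push_cast; linarith)
  have hw := grunwaldWeight_pos h₁ h₂ hm
  have hpoly := wsgd_quadratic_nonneg h₁ h₂ hm'
  rw [hrec₂, hrec₁]
  push_cast
  calc (0 : ℝ) ≤ ((4 + 5*α + 3*α^2)/24 * ((m + 1 - α) * (m - α))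
        + (8 + α - 3*α^2)/12 * ((m - α) * (m + 2))
        + (4 - 7*α + 3*α^2)/24 * ((m + 1) * (m + 2))) / ((m + 1) * (m + 2)) * grunwaldWeight α m :=
        mul_nonneg (div_nonneg hpoly (by positivity)) hw.le
    _ = _ := by field_simp; ring

theorem stmt3_general (α lam h : ℝ) (hα : 1 < α) (hα2 : α < 2)
    (g : ℕ → ℝ) (hg : ∀ k, g k = Real.Gamma ((k : ℝ) - α) / (Real.Gamma (-α) * Real.Gamma ((k : ℝ) + 1)))
    (μm1 μ0 μ1 : ℝ)
    (hm1 : μm1 = (4 - 7*α + 3*α^2)/24)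
    (h0 : μ0 = (8 + α - 3*α^2)/12)
    (h1 : μ1 = (4 + 5*α + 3*α^2)/24)
    (k : ℕ) (hk : 4 ≤ k) :
    0 ≤ (μ1 * g k + μ0 * g (k-1) + μm1 * g (k-2)) * Real.exp ((1 - (k : ℝ)) * lam * h) := by
  obtain ⟨m, rfl⟩ : ∃ m, k = m + 2 := ⟨k - 2, by omega⟩
  have hg' : g = grunwaldWeight α := funext hg
  subst hg' hm1 h0 h1
  refine mul_nonneg ?_ (exp_pos _).le
  simpa only [Nat.add_sub_cancel, show m + 2 - 1 = m + 1 by omega]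
    using wsgd_combination_nonneg hα hα2 (m := m) (by omega)

theorem stmt3 (α lam h : ℝ) (hα : 1 < α) (hα2 : α < 2) (hlam : 0 ≤ lam) (hh : 0 < h)
    (g : ℕ → ℝ) (hg : ∀ k, g k = Real.Gamma ((k : ℝ) - α) / (Real.Gamma (-α) * Real.Gamma ((k : ℝ) + 1)))
    (μm1 μ0 μ1 : ℝ)
    (hm1 : μm1 = (4 - 7*α + 3*α^2)/24)
    (h0 : μ0 = (8 + α - 3*α^2)/12)
    (h1 : μ1 = (4 + 5*α + 3*α^2)/24)
    (k : ℕ) (hk : 4 ≤ k) :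
    0 ≤ (μ1 * g k + μ0 * g (k-1) + μm1 * g (k-2)) * Real.exp ((1 - (k : ℝ)) * lam * h) :=
  stmt3_general α lam h hα hα2 g hg μm1 μ0 μ1 hm1 h0 h1 k hk
end

section
/- For 1 < α < 2, λ > 0, h > 0, the series Σ_{k=0}^∞ w_k^{(α,λ)} converges and equals (μ_1 e^{λh} + μ_0 + μ_{-1} e^{-λh})(1 - e^{-λh})^α, where w_0 = μ_1 g_0 e^{λh}, w_1 = μ_1 g_1 + μ_0 g_0, w_k = (μ_1 g_k + μ_0 g_{k-1} + μ_{-1} g_{k-2}) e^{(1-k)λh} for k ≥ 2. -/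
/-!
The Grünwald coefficients are `g k = Ring.multichoose (-α) k`, the coefficients of the
negative binomial series `(1 - x) ^ α = ∑ g k * x ^ k`, `|x| < 1`. With `x = exp (-λh)` the
weight is `w k = exp (λh) * (μ₁ g k + μ₀ g (k-1) + μ₋₁ g (k-2)) * x ^ k`, so `∑ w k` is
`exp (λh)` times the product of the polynomial `μ₁ + μ₀ x + μ₋₁ x²` with that series.
-/

open Polynomial

theorem Real.Gamma_add_nat_eq_ascPochhammer_mul {z : ℝ} (hz : ∀ k : ℕ, z ≠ -k) (n : ℕ) :
    Real.Gamma (z + n) = (ascPochhammer ℝ n).eval z * Real.Gamma z := by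
  induction n with
  | zero => simp
  | succ n ih =>
    have hzn : z + n ≠ 0 := fun h => hz n (eq_neg_of_add_eq_zero_left h)
    rw [Nat.cast_succ, ← add_assoc, Real.Gamma_add_one hzn, ih, ascPochhammer_succ_eval]
    ring

theorem Real.Gamma_add_nat_div_eq_multichoose {z : ℝ} (hz : ∀ k : ℕ, z ≠ -k) (n : ℕ) :
    Real.Gamma (z + n) / (Real.Gamma z * Real.Gamma (n + 1)) = Ring.multichoose z n := by
  have hΓ : Real.Gamma z ≠ 0 := Real.Gamma_ne_zero hz
  rw [Real.Gamma_nat_eq_factorial, Real.Gamma_add_nat_eq_ascPochhammer_mul hz,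
    ← ascPochhammer_smeval_eq_eval, ← Ring.factorial_nsmul_multichoose_eq_ascPochhammer,
    nsmul_eq_mul]
  field_simp

theorem Real.hasSum_multichoose_neg_mul_pow (a : ℝ) {x : ℝ} (hx : |x| < 1) :
    HasSum (fun n => Ring.multichoose (-a) n * x ^ n) ((1 - x) ^ a) := by
  have hmem : -x ∈ Metric.eball (0 : ℝ) 1 := by
    simpa [edist_dist, Real.dist_eq] using hx
  have hterm (n : ℕ) : binomialSeries ℝ a n (fun _ => -x) = Ring.multichoose (-a) n * x ^ n := by
    have hsign : ((-1 : ℝ) ^ n * (-1) ^ n) = 1 := by rw [← mul_pow]; norm_num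
    rw [binomialSeries_apply, ← neg_neg a, Ring.choose_neg', neg_neg, List.ofFn_const,
      List.prod_replicate, neg_pow, Units.smul_def, Int.coe_negOnePow_natCast, zsmul_eq_mul,
      smul_eq_mul]
    push_cast
    linear_combination (Ring.multichoose (-a) n * x ^ n) * hsign
  have := (Real.one_add_rpow_hasFPowerSeriesOnBall_zero (a := a)).hasSum hmem
  rwa [funext hterm, zero_add, ← sub_eq_add_neg] at this

theorem HasSum.nat_shift {M : Type*} [AddCommMonoid M] [TopologicalSpace M] {f : ℕ → M} {a : M}
    (h : HasSum f a) (d : ℕ) : HasSum (fun n => if d ≤ n then f (n - d) else 0) a := by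
  have hinj : Function.Injective (· + d) := add_left_injective d
  have hsupp : ∀ n ∉ Set.range (· + d), (if d ≤ n then f (n - d) else 0) = 0 := by
    intro n hn
    rw [if_neg]
    exact fun hdn => hn ⟨n - d, Nat.sub_add_cancel hdn⟩
  refine (hinj.hasSum_iff hsupp).mp ?_
  simpa [Function.comp_def] using h

theorem HasSum.quadratic_mul_powerSeries {R : Type*} [CommSemiring R] [TopologicalSpace R]
    [IsTopologicalSemiring R] {a : ℕ → R} {x A : R} (h : HasSum (fun n => a n * x ^ n) A)
    (c₀ c₁ c₂ : R) :
    HasSum (fun n => (c₀ * a n + (if 1 ≤ n then c₁ * a (n - 1) else 0)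
        + (if 2 ≤ n then c₂ * a (n - 2) else 0)) * x ^ n) ((c₀ + c₁ * x + c₂ * x ^ 2) * A) := by
  have h₀ := h.mul_left c₀
  have h₁ := (h.mul_left (c₁ * x)).nat_shift 1
  have h₂ := (h.mul_left (c₂ * x ^ 2)).nat_shift 2
  rw [add_mul, add_mul]
  refine (h₀.add h₁).add h₂ |>.congr_fun fun n => ?_
  rcases n with _ | _ | n <;>
    simp only [Nat.reduceLeDiff, le_add_iff_nonneg_left, zero_le, ↓reduceIte, Nat.add_sub_cancel,
      Nat.reduceSubDiff] <;>
    ring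

theorem Real.exp_one_sub_natCast_mul (t : ℝ) (k : ℕ) :
    Real.exp ((1 - k) * t) = Real.exp t * Real.exp (-t) ^ k := by
  rw [← Real.exp_nat_mul, ← Real.exp_add]
  ring_nf

theorem stmt4_general (α lam h : ℝ) (hα : 1 < α) (hα2 : α < 2) (hlam : 0 < lam) (hh : 0 < h)
    (g : ℕ → ℝ) (hg : ∀ k, g k = Real.Gamma ((k : ℝ) - α) / (Real.Gamma (-α) * Real.Gamma ((k : ℝ) + 1)))
    (μm1 μ0 μ1 : ℝ)
    (w : ℕ → ℝ)
    (hw0 : w 0 = μ1 * g 0 * Real.exp (lam * h))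
    (hw1 : w 1 = μ1 * g 1 + μ0 * g 0)
    (hwk : ∀ k, 2 ≤ k → w k = (μ1 * g k + μ0 * g (k-1) + μm1 * g (k-2)) * Real.exp ((1 - (k : ℝ)) * lam * h)) :
    HasSum w ((μ1 * Real.exp (lam * h) + μ0 + μm1 * Real.exp (-(lam * h)))
      * (1 - Real.exp (-(lam * h))) ^ α) := by
  set x := Real.exp (-(lam * h))
  set E := Real.exp (lam * h)
  have hEx : E * x = 1 := by rw [← Real.exp_add, add_neg_cancel, Real.exp_zero]
  have hx : |x| < 1 := by
    rw [abs_of_pos (Real.exp_pos _), Real.exp_lt_one_iff, neg_lt_zero]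
    positivity
  have hα_not_nat (k : ℕ) : -α ≠ -k := by
    rw [ne_eq, neg_inj]
    rintro rfl
    norm_cast at hα hα2
    omega
  have hg_series : HasSum (fun k => g k * x ^ k) ((1 - x) ^ α) := by
    refine (Real.hasSum_multichoose_neg_mul_pow α hx).congr_fun fun k => ?_
    rw [hg, sub_eq_neg_add, Real.Gamma_add_nat_div_eq_multichoose hα_not_nat]
  have hw := (hg_series.quadratic_mul_powerSeries μ1 μ0 μm1).mul_left E
  have hsum : (μ1 * E + μ0 + μm1 * x) * (1 - x) ^ α
      = E * ((μ1 + μ0 * x + μm1 * x ^ 2) * (1 - x) ^ α) := by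
    linear_combination -(μ0 + μm1 * x) * (1 - x) ^ α * hEx
  rw [hsum]
  refine hw.congr_fun fun k => ?_
  rcases k with _ | _ | k
  · simp only [hw0, Nat.reduceLeDiff, ↓reduceIte]
    ring
  · simp only [hw1, Nat.reduceLeDiff, ↓reduceIte, Nat.sub_self]
    linear_combination -(μ1 * g 1 + μ0 * g 0) * hEx
  · simp only [hwk (k + 2) le_add_self, mul_assoc _ lam h, Real.exp_one_sub_natCast_mul,
      le_add_iff_nonneg_left, zero_le, ↓reduceIte, Nat.add_sub_cancel, Nat.reduceSubDiff]
    ring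

theorem stmt4 (α lam h : ℝ) (hα : 1 < α) (hα2 : α < 2) (hlam : 0 < lam) (hh : 0 < h)
    (g : ℕ → ℝ) (hg : ∀ k, g k = Real.Gamma ((k : ℝ) - α) / (Real.Gamma (-α) * Real.Gamma ((k : ℝ) + 1)))
    (μm1 μ0 μ1 : ℝ)
    (hm1 : μm1 = (4 - 7*α + 3*α^2)/24)
    (h0 : μ0 = (8 + α - 3*α^2)/12)
    (h1 : μ1 = (4 + 5*α + 3*α^2)/24)
    (w : ℕ → ℝ)
    (hw0 : w 0 = μ1 * g 0 * Real.exp (lam * h))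
    (hw1 : w 1 = μ1 * g 1 + μ0 * g 0)
    (hwk : ∀ k, 2 ≤ k → w k = (μ1 * g k + μ0 * g (k-1) + μm1 * g (k-2)) * Real.exp ((1 - (k : ℝ)) * lam * h)) :
    HasSum w ((μ1 * Real.exp (lam * h) + μ0 + μm1 * Real.exp (-(lam * h)))
      * (1 - Real.exp (-(lam * h))) ^ α) :=
  stmt4_general α lam h hα hα2 hlam hh g hg μm1 μ0 μ1 w hw0 hw1 hwk
end
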